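/- Let g(x) = b₂ + Σ_{i=1}^H w₂ᵢ·FELU(w₁ᵢ·x + b₁ᵢ) with all w₁ᵢ ≠ 0. Then the Lipschitz constant of g equals the maximum over i ∈ {1,…,H} of |g'(-b₁ᵢ/w₁ᵢ)| and |g'(-(1+b₁ᵢ)/w₁ᵢ)|. -/

import Mathlib

/-!
FELU is `C¹` with derivative `clamp (x + 1)` onto `[0, 1]`, so
`g' x = ∑ᵢ w₂ᵢ w₁ᵢ clamp (w₁ᵢ x + b₁ᵢ + 1)`. Each summand is constant outside the two breakpoints
`-b₁ᵢ / w₁ᵢ`, `-(1 + b₁ᵢ) / w₁ᵢ` and affine between them, so `g'` is constant outside the set of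
all breakpoints and affine between consecutive ones; hence `|g'|` attains its supremum at a
breakpoint. For a differentiable function on `ℝ` the least Lipschitz constant is `sup |g'|`: the
mean value inequality gives one bound, difference quotients the other.
-/

noncomputable def FELU (x : ℝ) : ℝ :=
  if x > 0 then x else if -1 ≤ x then (x + 1) ^ 2 / 2 - 1 / 2 else -(1 / 2)

open Set

theorem HasDerivWithinAt.of_eqOn_of_isClosed {f φ f' : ℝ → ℝ} {s : Set ℝ} (hs : IsClosed s)
    (hf : EqOn f φ s) (hφ : ∀ x ∈ s, HasDerivAt φ (f' x) x) (x : ℝ) :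
    HasDerivWithinAt f (f' x) s x := by
  by_cases hx : x ∈ s
  · exact (hφ x hx).hasDerivWithinAt.congr hf (hf hx)
  · -- `x` is not in the closure of `s`, so `𝓝[s] x = ⊥` and the claim is vacuous.
    exact HasFDerivWithinAt.of_notMem_closure (by rwa [hs.closure_eq])

theorem Finset.exists_gap_containing {α : Type*} [LinearOrder α] (S : Finset α) {x : α}
    (hl : ∃ s ∈ S, s ≤ x) (hr : ∃ s ∈ S, x ≤ s) :
    ∃ l ∈ S, ∃ r ∈ S, l ≤ x ∧ x ≤ r ∧ ∀ s ∈ S, s ∉ Set.Ioo l r := by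
  have hL : (S.filter (· ≤ x)).Nonempty := by simpa [Finset.Nonempty] using hl
  have hR : (S.filter (x ≤ ·)).Nonempty := by simpa [Finset.Nonempty] using hr
  obtain ⟨hlS, hlx⟩ := Finset.mem_filter.1 ((S.filter (· ≤ x)).max'_mem hL)
  obtain ⟨hrS, hxr⟩ := Finset.mem_filter.1 ((S.filter (x ≤ ·)).min'_mem hR)
  refine ⟨_, hlS, _, hrS, hlx, hxr, fun s hs ⟨hls, hsr⟩ => ?_⟩
  rcases le_total s x with h | h
  · exact ((S.filter (· ≤ x)).le_max' s (Finset.mem_filter.2 ⟨hs, h⟩)).not_gt hls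
  · exact ((S.filter (x ≤ ·)).min'_le s (Finset.mem_filter.2 ⟨hs, h⟩)).not_gt hsr

theorem abs_affine_le_max_of_mem_Icc {α β l r x : ℝ} (hx : x ∈ Icc l r) :
    |α * x + β| ≤ max |α * l + β| |α * r + β| := by
  rcases le_total 0 α with hα | hα
  · exact abs_le_max_abs_abs (by nlinarith [hx.1]) (by nlinarith [hx.2])
  · rw [max_comm]
    exact abs_le_max_abs_abs (by nlinarith [hx.2]) (by nlinarith [hx.1])

theorem exists_mem_abs_le_of_affine_on_gaps {S : Finset ℝ} (hS : S.Nonempty) {f : ℝ → ℝ}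
    (hlow : ∀ x y, (∀ s ∈ S, x ≤ s) → (∀ s ∈ S, y ≤ s) → f x = f y)
    (hhigh : ∀ x y, (∀ s ∈ S, s ≤ x) → (∀ s ∈ S, s ≤ y) → f x = f y)
    (hgap : ∀ l r, (∀ s ∈ S, s ∉ Ioo l r) → ∃ α β, ∀ x ∈ Icc l r, f x = α * x + β) (x : ℝ) :
    ∃ s ∈ S, |f x| ≤ |f s| := by
  by_cases hl : ∃ s ∈ S, s ≤ x
  · by_cases hr : ∃ s ∈ S, x ≤ s
    · obtain ⟨l, hl, r, hr, hlx, hxr, hlr⟩ := S.exists_gap_containing hl hr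
      obtain ⟨α, β, hf⟩ := hgap l r hlr
      have hx : x ∈ Icc l r := ⟨hlx, hxr⟩
      have := abs_affine_le_max_of_mem_Icc (α := α) (β := β) hx
      rw [← hf x hx, ← hf l (left_mem_Icc.2 (hlx.trans hxr)),
        ← hf r (right_mem_Icc.2 (hlx.trans hxr))] at this
      rcases le_max_iff.1 this with h | h
      exacts [⟨l, hl, h⟩, ⟨r, hr, h⟩]
    · push Not at hr
      refine ⟨S.max' hS, S.max'_mem hS, (congrArg abs ?_).le⟩
      exact hhigh _ _ (fun s hs => (hr s hs).le) (fun s hs => S.le_max' s hs)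
  · push Not at hl
    refine ⟨S.min' hS, S.min'_mem hS, (congrArg abs ?_).le⟩
    exact hlow _ _ (fun s hs => (hl s hs).le) (fun s hs => S.min'_le s hs)

theorem nonneg_or_nonpos_on_Icc_of_notMem_Ioo {w p l r : ℝ} (hp : p ∉ Ioo l r) :
    (∀ x ∈ Icc l r, 0 ≤ w * (x - p)) ∨ (∀ x ∈ Icc l r, w * (x - p) ≤ 0) := by
  rw [mem_Ioo, not_and_or, not_lt, not_lt] at hp
  rcases hp with hp | hp <;> rcases le_total 0 w with hw | hw
  · exact .inl fun x hx => mul_nonneg hw (by linarith [hx.1])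
  · exact .inr fun x hx => mul_nonpos_of_nonpos_of_nonneg hw (by linarith [hx.1])
  · exact .inr fun x hx => mul_nonpos_of_nonneg_of_nonpos hw (by linarith [hx.2])
  · exact .inl fun x hx => mul_nonneg_of_nonpos_of_nonpos hw (by linarith [hx.2])

noncomputable def feluDeriv (x : ℝ) : ℝ := max 0 (min 1 (x + 1))

theorem feluDeriv_of_le_neg_one {x : ℝ} (hx : x ≤ -1) : feluDeriv x = 0 :=
  max_eq_left ((min_le_right _ _).trans (by linarith))

theorem feluDeriv_of_mem_Icc {x : ℝ} (hx : x ∈ Icc (-1) 0) : feluDeriv x = x + 1 := by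
  rw [feluDeriv, min_eq_right (by linarith [hx.2]), max_eq_right (by linarith [hx.1])]

theorem feluDeriv_of_nonneg {x : ℝ} (hx : 0 ≤ x) : feluDeriv x = 1 := by
  rw [feluDeriv, min_eq_left (by linarith), max_eq_right zero_le_one]

theorem hasDerivAt_FELU (x : ℝ) : HasDerivAt FELU (feluDeriv x) x := by
  have hlow : HasDerivWithinAt FELU (feluDeriv x) (Iic (-1)) x :=
    .of_eqOn_of_isClosed isClosed_Iic (φ := fun _ => -(1 / 2))
      (fun y (hy : y ≤ -1) => by unfold FELU; split_ifs <;> nlinarith)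
      (fun y hy => by rw [feluDeriv_of_le_neg_one hy]; exact hasDerivAt_const y _) x
  have hmid : HasDerivWithinAt FELU (feluDeriv x) (Icc (-1) 0) x :=
    .of_eqOn_of_isClosed isClosed_Icc (φ := fun y => (y + 1) ^ 2 / 2 - 1 / 2)
      (fun y hy => by unfold FELU; split_ifs <;> nlinarith [hy.1, hy.2])
      (fun y hy => by
        rw [feluDeriv_of_mem_Icc hy]
        have := ((((hasDerivAt_id y).add_const 1).pow 2).div_const 2).sub_const (1 / 2)
        exact this.congr_deriv (by simp)) x
  have hhigh : HasDerivWithinAt FELU (feluDeriv x) (Ici 0) x :=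
    .of_eqOn_of_isClosed isClosed_Ici (φ := id)
      (fun y (hy : 0 ≤ y) => by unfold FELU; split_ifs <;> simp only [id] <;> nlinarith)
      (fun y hy => by rw [feluDeriv_of_nonneg hy]; exact hasDerivAt_id y) x
  have hcover : Iic (-1) ∪ (Icc (-1) 0 ∪ Ici 0) = univ := by
    rw [Icc_union_Ici_eq_Ici (by norm_num), Iic_union_Ici]
  simpa [hcover, hasDerivWithinAt_univ] using hlow.union (hmid.union hhigh)

theorem feluDeriv_mul_add_of_le_of_le {w b x : ℝ} (hw : w ≠ 0) (hp : x ≤ -b / w)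
    (hq : x ≤ -(1 + b) / w) : feluDeriv (w * x + b) = if 0 < w then 0 else 1 := by
  rcases hw.lt_or_gt with hw | hw
  · rw [if_neg hw.not_gt, feluDeriv_of_nonneg]
    rw [le_div_iff_of_neg hw] at hp
    linarith
  · rw [if_pos hw, feluDeriv_of_le_neg_one]
    rw [le_div_iff₀ hw] at hq
    linarith

theorem feluDeriv_mul_add_of_ge_of_ge {w b x : ℝ} (hw : w ≠ 0) (hp : -b / w ≤ x)
    (hq : -(1 + b) / w ≤ x) : feluDeriv (w * x + b) = if 0 < w then 1 else 0 := by
  rcases hw.lt_or_gt with hw | hw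
  · rw [if_neg hw.not_gt, feluDeriv_of_le_neg_one]
    rw [div_le_iff_of_neg hw] at hq
    linarith
  · rw [if_pos hw, feluDeriv_of_nonneg]
    rw [div_le_iff₀ hw] at hp
    linarith

theorem exists_feluDeriv_mul_add_eq_affine_on_Icc {w b l r : ℝ} (hw : w ≠ 0) (hp : -b / w ∉ Ioo l r)
    (hq : -(1 + b) / w ∉ Ioo l r) :
    ∃ α β : ℝ, ∀ x ∈ Icc l r, feluDeriv (w * x + b) = α * x + β := by
  have hy : ∀ x, w * x + b = w * (x - -b / w) := fun x => by field_simp; ring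
  have hy1 : ∀ x, w * x + b + 1 = w * (x - -(1 + b) / w) := fun x => by field_simp; ring
  rcases nonneg_or_nonpos_on_Icc_of_notMem_Ioo (w := w) hp with h0 | h0
  · exact ⟨0, 1, fun x hx => by rw [feluDeriv_of_nonneg (hy x ▸ h0 x hx)]; ring⟩
  rcases nonneg_or_nonpos_on_Icc_of_notMem_Ioo (w := w) hq with h1 | h1
  · refine ⟨w, b + 1, fun x hx => ?_⟩
    rw [feluDeriv_of_mem_Icc ⟨by linarith [hy1 x, h1 x hx], by linarith [hy x, h0 x hx]⟩]
    ring
  · refine ⟨0, 0, fun x hx => ?_⟩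
    rw [feluDeriv_of_le_neg_one (by linarith [hy1 x, h1 x hx])]
    ring

section Network

variable {ι : Type*} [Fintype ι] (w₁ w₂ b₁ : ι → ℝ)

noncomputable def feluNetDeriv (x : ℝ) : ℝ := ∑ i, w₂ i * w₁ i * feluDeriv (w₁ i * x + b₁ i)

theorem hasDerivAt_feluNet (b₂ x : ℝ) :
    HasDerivAt (fun x => b₂ + ∑ i, w₂ i * FELU (w₁ i * x + b₁ i)) (feluNetDeriv w₁ w₂ b₁ x) x := by
  refine .const_add b₂ (.fun_sum fun i _ => ?_)
  have hinner := ((hasDerivAt_id' x).const_mul (w₁ i)).add_const (b₁ i)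
  exact (((hasDerivAt_FELU _).comp x hinner).const_mul (w₂ i)).congr_deriv (by ring)

theorem feluNetDeriv_eq_of_le_breakpoints (hw : ∀ i, w₁ i ≠ 0) {x y : ℝ}
    (hx : ∀ i, x ≤ -b₁ i / w₁ i ∧ x ≤ -(1 + b₁ i) / w₁ i)
    (hy : ∀ i, y ≤ -b₁ i / w₁ i ∧ y ≤ -(1 + b₁ i) / w₁ i) :
    feluNetDeriv w₁ w₂ b₁ x = feluNetDeriv w₁ w₂ b₁ y := by
  refine Finset.sum_congr rfl fun i _ => ?_
  rw [feluDeriv_mul_add_of_le_of_le (hw i) (hx i).1 (hx i).2,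
    feluDeriv_mul_add_of_le_of_le (hw i) (hy i).1 (hy i).2]

theorem feluNetDeriv_eq_of_breakpoints_le (hw : ∀ i, w₁ i ≠ 0) {x y : ℝ}
    (hx : ∀ i, -b₁ i / w₁ i ≤ x ∧ -(1 + b₁ i) / w₁ i ≤ x)
    (hy : ∀ i, -b₁ i / w₁ i ≤ y ∧ -(1 + b₁ i) / w₁ i ≤ y) :
    feluNetDeriv w₁ w₂ b₁ x = feluNetDeriv w₁ w₂ b₁ y := by
  refine Finset.sum_congr rfl fun i _ => ?_
  rw [feluDeriv_mul_add_of_ge_of_ge (hw i) (hx i).1 (hx i).2,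
    feluDeriv_mul_add_of_ge_of_ge (hw i) (hy i).1 (hy i).2]

theorem exists_feluNetDeriv_eq_affine_on_Icc (hw : ∀ i, w₁ i ≠ 0) {l r : ℝ}
    (hgap : ∀ i, -b₁ i / w₁ i ∉ Ioo l r ∧ -(1 + b₁ i) / w₁ i ∉ Ioo l r) :
    ∃ α β : ℝ, ∀ x ∈ Icc l r, feluNetDeriv w₁ w₂ b₁ x = α * x + β := by
  choose α β hαβ using fun i =>
    exists_feluDeriv_mul_add_eq_affine_on_Icc (hw i) (hgap i).1 (hgap i).2
  refine ⟨∑ i, w₂ i * w₁ i * α i, ∑ i, w₂ i * w₁ i * β i, fun x hx => ?_⟩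
  simp only [feluNetDeriv, Finset.sum_mul, ← Finset.sum_add_distrib, hαβ _ x hx]
  exact Finset.sum_congr rfl fun i _ => by ring

theorem exists_abs_feluNetDeriv_le [Nonempty ι] (hw : ∀ i, w₁ i ≠ 0) (x : ℝ) :
    ∃ i, |feluNetDeriv w₁ w₂ b₁ x| ≤
      max |feluNetDeriv w₁ w₂ b₁ (-b₁ i / w₁ i)| |feluNetDeriv w₁ w₂ b₁ (-(1 + b₁ i) / w₁ i)| := by
  classical
  set S := Finset.univ.image (fun i => -b₁ i / w₁ i) ∪
    Finset.univ.image (fun i => -(1 + b₁ i) / w₁ i)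
  have hp : ∀ i, -b₁ i / w₁ i ∈ S := fun i =>
    Finset.mem_union_left _ (Finset.mem_image_of_mem _ (Finset.mem_univ i))
  have hq : ∀ i, -(1 + b₁ i) / w₁ i ∈ S := fun i =>
    Finset.mem_union_right _ (Finset.mem_image_of_mem _ (Finset.mem_univ i))
  obtain ⟨s, hs, hxs⟩ := exists_mem_abs_le_of_affine_on_gaps
    (f := feluNetDeriv w₁ w₂ b₁) ⟨_, hp (Classical.arbitrary ι)⟩
    (fun x y hx hy => feluNetDeriv_eq_of_le_breakpoints w₁ w₂ b₁ hw
      (fun i => ⟨hx _ (hp i), hx _ (hq i)⟩) (fun i => ⟨hy _ (hp i), hy _ (hq i)⟩))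
    (fun x y hx hy => feluNetDeriv_eq_of_breakpoints_le w₁ w₂ b₁ hw
      (fun i => ⟨hx _ (hp i), hx _ (hq i)⟩) (fun i => ⟨hy _ (hp i), hy _ (hq i)⟩))
    (fun l r hlr => exists_feluNetDeriv_eq_affine_on_Icc w₁ w₂ b₁ hw
      (fun i => ⟨hlr _ (hp i), hlr _ (hq i)⟩)) x
  rcases Finset.mem_union.1 hs with hs | hs <;> obtain ⟨i, -, rfl⟩ := Finset.mem_image.1 hs
  exacts [⟨i, hxs.trans (le_max_left _ _)⟩, ⟨i, hxs.trans (le_max_right _ _)⟩]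

theorem isLUB_range_abs_feluNetDeriv (hw : ∀ i, w₁ i ≠ 0) :
    IsLUB (range fun x => |feluNetDeriv w₁ w₂ b₁ x|)
      (⨆ i, max |feluNetDeriv w₁ w₂ b₁ (-b₁ i / w₁ i)|
        |feluNetDeriv w₁ w₂ b₁ (-(1 + b₁ i) / w₁ i)|) := by
  refine ⟨?_, fun M hM => Real.iSup_le (fun i => max_le (hM ⟨_, rfl⟩) (hM ⟨_, rfl⟩))
    ((abs_nonneg _).trans (hM ⟨0, rfl⟩))⟩
  rintro _ ⟨x, rfl⟩
  rcases isEmpty_or_nonempty ι with hι | hι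
  · simp [feluNetDeriv, Real.iSup_of_isEmpty]
  · obtain ⟨i, hi⟩ := exists_abs_feluNetDeriv_le w₁ w₂ b₁ hw x
    exact le_ciSup_of_le (Set.finite_range _).bddAbove i hi

end Network

theorem isLeast_lipschitz_of_isLUB_range_abs_deriv {f f' : ℝ → ℝ} {M : ℝ}
    (hf : ∀ x, HasDerivAt f (f' x) x) (hM : IsLUB (range fun x => |f' x|) M) :
    IsLeast {L : ℝ | 0 ≤ L ∧ ∀ x y : ℝ, |f x - f y| ≤ L * |x - y|} M := by
  refine ⟨⟨(abs_nonneg _).trans (hM.1 ⟨0, rfl⟩), fun x y => ?_⟩, ?_⟩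
  · simpa only [Real.norm_eq_abs] using convex_univ.norm_image_sub_le_of_norm_hasDerivWithin_le
      (fun z _ => (hf z).hasDerivWithinAt) (fun z _ => hM.1 ⟨z, rfl⟩) (mem_univ y) (mem_univ x)
  · rintro L ⟨hL, hLip⟩
    refine hM.2 ?_
    rintro _ ⟨x, rfl⟩
    have := (hf x).le_of_lipschitz (LipschitzWith.of_dist_le' (f := f) (K := L) hLip)
    rwa [Real.coe_toNNReal _ hL] at this

theorem felu_network_lipschitz_constant (H : ℕ) (w₁ w₂ b₁ : Fin H → ℝ) (b₂ : ℝ)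
    (hw : ∀ i, w₁ i ≠ 0)
    (g : ℝ → ℝ) (hg : g = fun x => b₂ + ∑ i, w₂ i * FELU (w₁ i * x + b₁ i)) :
    IsLeast {L : ℝ | 0 ≤ L ∧ ∀ x y : ℝ, |g x - g y| ≤ L * |x - y|}
      (⨆ i : Fin H, max |deriv g (-b₁ i / w₁ i)| |deriv g (-(1 + b₁ i) / w₁ i)|) := by
  have hg' : ∀ x, HasDerivAt g (feluNetDeriv w₁ w₂ b₁ x) x := hg ▸ hasDerivAt_feluNet w₁ w₂ b₁ b₂
  simp only [(hg' _).deriv]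
  exact isLeast_lipschitz_of_isLUB_range_abs_deriv hg' (isLUB_range_abs_feluNetDeriv w₁ w₂ b₁ hw)
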